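/- arXiv:quant-ph/0302064 — 2 statements merged into one kernel-verified Lean document; each statement's English description precedes it below -/
import Mathlib

section
/- Let n be a prime number and let U, V be the Weyl pair in dimension n. Consider the n + 1 unitary matrices A_0 = U and A_{m+1} = U^m · V for m = 0, …, n−1. For each i = 0, …, n, let b_i be any orthonormal basis of ℂ^n consisting of eigenvectors of A_i. Then the ℂ-linear span of the (n+1)·n rank-one projectors onto all the vectors of these n + 1 bases equals the space of all n×n complex matrices (i.e., these bases form a complete set of projectors). -/
open Matrix

/-- The primitive `n`-th root of unity `ζ = exp(2πi/n)`. -/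
noncomputable def zeta (n : ℕ) : ℂ := Complex.exp (2 * Real.pi * Complex.I / n)

/-- The cyclic shift matrix `U` of the Weyl pair: `U i j = 1` iff `j ≡ i + 1 (mod n)`. -/
def weylU (n : ℕ) : Matrix (Fin n) (Fin n) ℂ :=
  Matrix.of fun i j => if ((i : ℕ) + 1) % n = (j : ℕ) then 1 else 0

/-- The diagonal matrix `V` of the Weyl pair: `V k k = ζ^k`. -/
noncomputable def weylV (n : ℕ) : Matrix (Fin n) (Fin n) ℂ :=
  Matrix.diagonal fun k => zeta n ^ (k : ℕ)

/-- The rank-one projector onto a vector `v ∈ ℂ^n`: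
`(proj v) i j = v i * conj (v j)`. -/
noncomputable def proj {n : ℕ} (v : Fin n → ℂ) : Matrix (Fin n) (Fin n) ℂ :=
  fun i j => v i * (starRingEnd ℂ) (v j)

/-- A family of `n` vectors in `ℂ^n` is an orthonormal basis iff it is
orthonormal with respect to the standard Hermitian inner product. -/
def IsONBasis {n : ℕ} (b : Fin n → (Fin n → ℂ)) : Prop :=
  ∀ k l, (∑ x, (starRingEnd ℂ) (b k x) * b l x) = if k = l then 1 else 0

/-! ### Auxiliary development -/

lemma zeta_ne_zero (n : ℕ) : zeta n ≠ 0 := Complex.exp_ne_zero _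

lemma zeta_pow_n {n : ℕ} (hn : n ≠ 0) : zeta n ^ n = 1 :=
  (Complex.isPrimitiveRoot_exp n hn).pow_eq_one

lemma zeta_pow_congr {n : ℕ} (hn : n ≠ 0) {x y : ℕ} (h : x ≡ y [MOD n]) :
    zeta n ^ x = zeta n ^ y := by
  rw [pow_eq_pow_mod x (zeta_pow_n hn), pow_eq_pow_mod y (zeta_pow_n hn), h]

/-- The Weyl operators `U^a V^b`, written out explicitly. -/
noncomputable def wmat (n a b : ℕ) : Matrix (Fin n) (Fin n) ℂ :=
  Matrix.of fun i j => if ((i : ℕ) + a) % n = (j : ℕ) then zeta n ^ ((j : ℕ) * b) else 0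

lemma weylU_pow (n k : ℕ) :
    weylU n ^ k = Matrix.of fun i j : Fin n =>
      if ((i : ℕ) + k) % n = (j : ℕ) then (1 : ℂ) else 0 := by
  induction k with
  | zero =>
    ext i j
    simp only [pow_zero, Matrix.of_apply, Nat.add_zero, Nat.mod_eq_of_lt i.isLt,
      Matrix.one_apply, Fin.val_eq_val]
  | succ k ih =>
    ext i j
    rw [pow_succ, ih]
    simp only [Matrix.mul_apply, Matrix.of_apply, weylU]
    have hn : 0 < n := i.pos
    rw [Finset.sum_eq_single (⟨((i : ℕ) + k) % n, Nat.mod_lt _ hn⟩ : Fin n)]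
    · simp only [if_pos rfl, ite_true, one_mul, Nat.mod_add_mod, ← Nat.add_assoc]
    · intro x _ hx
      rw [if_neg, zero_mul]
      intro h
      exact hx (Fin.ext h.symm)
    · intro h; exact absurd (Finset.mem_univ _) h

lemma wmat_eq (n a b : ℕ) : weylU n ^ a * weylV n ^ b = wmat n a b := by
  ext i j
  rw [weylV, Matrix.diagonal_pow, weylU_pow, Matrix.mul_diagonal]
  by_cases h : ((i : ℕ) + a) % n = (j : ℕ) <;>
    simp [wmat, h, pow_mul]

lemma wmat_mod (n : ℕ) (hn : n ≠ 0) (a b : ℕ) : wmat n a b = wmat n (a % n) (b % n) := by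
  ext i j
  simp only [wmat, Matrix.of_apply]
  have h1 : ((i : ℕ) + a) % n = ((i : ℕ) + a % n) % n := by
    conv_lhs => rw [Nat.add_mod]
    conv_rhs => rw [Nat.add_mod, Nat.mod_mod_of_dvd a dvd_rfl]
  have h2 : zeta n ^ ((j : ℕ) * b) = zeta n ^ ((j : ℕ) * (b % n)) :=
    zeta_pow_congr hn (Nat.ModEq.mul_left _ (Nat.mod_mod_of_dvd b dvd_rfl).symm)
  rw [h1, h2]

lemma wmat_zero (n : ℕ) : wmat n 0 0 = 1 := by
  ext i j
  simp only [wmat, Matrix.of_apply, Nat.add_zero, Nat.mod_eq_of_lt i.isLt,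
    Matrix.one_apply, Fin.val_eq_val, Nat.mul_zero, pow_zero]

lemma wmat_mul (n : ℕ) (hn : n ≠ 0) (a b c d : ℕ) :
    wmat n a b * wmat n c d = (zeta n ^ (c * b))⁻¹ • wmat n (a + c) (b + d) := by
  ext i j
  simp only [wmat, Matrix.mul_apply, Matrix.of_apply, Matrix.smul_apply, smul_eq_mul]
  have hn' : 0 < n := i.pos
  rw [Finset.sum_eq_single (⟨((i : ℕ) + a) % n, Nat.mod_lt _ hn'⟩ : Fin n)]
  · simp only [if_pos rfl, ite_true]
    have hcond : (((i : ℕ) + a) % n + c) % n = ((i : ℕ) + (a + c)) % n := by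
      rw [Nat.mod_add_mod, Nat.add_assoc]
    by_cases h : ((i : ℕ) + (a + c)) % n = (j : ℕ)
    · rw [hcond, if_pos h, if_pos h]
      have hmeq : (((i : ℕ) + a) % n) * b + c * b + (j : ℕ) * d
          ≡ (j : ℕ) * b + (j : ℕ) * d [MOD n] := by
        refine Nat.ModEq.add_right _ ?_
        have he : (((i : ℕ) + a) % n) * b + c * b = (((i : ℕ) + a) % n + c) * b := by ring
        rw [he]
        refine Nat.ModEq.mul_right b ?_
        calc ((i : ℕ) + a) % n + c ≡ (i : ℕ) + a + c [MOD n] :=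
              Nat.ModEq.add_right c (Nat.mod_modEq _ n)
        _ ≡ (j : ℕ) [MOD n] := by
              unfold Nat.ModEq
              rw [Nat.add_assoc, h, Nat.mod_eq_of_lt j.isLt]
      have key : zeta n ^ (c * b) *
          (zeta n ^ ((((i : ℕ) + a) % n) * b) * zeta n ^ ((j : ℕ) * d))
          = zeta n ^ ((j : ℕ) * (b + d)) := by
        rw [← pow_add, ← pow_add, Nat.mul_add]
        refine zeta_pow_congr hn ?_
        have he : c * b + ((((i : ℕ) + a) % n) * b + (j : ℕ) * d)
            = (((i : ℕ) + a) % n) * b + c * b + (j : ℕ) * d := by ring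
        rw [he]
        exact hmeq
      rw [← key, inv_mul_cancel_left₀ (pow_ne_zero _ (zeta_ne_zero n))]
    · rw [hcond, if_neg h, if_neg h, mul_zero, mul_zero]
  · intro x _ hx
    rw [if_neg, zero_mul]
    intro h
    exact hx (Fin.ext h.symm)
  · intro h; exact absurd (Finset.mem_univ _) h

lemma wmat_pow (n : ℕ) (hn : n ≠ 0) (m j : ℕ) :
    ∃ c : ℂ, c ≠ 0 ∧ wmat n m 1 ^ j = c • wmat n (m * j) j := by
  induction j with
  | zero =>
    exact ⟨1, one_ne_zero, by rw [pow_zero, Nat.mul_zero, wmat_zero, one_smul]⟩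
  | succ j ih =>
    obtain ⟨c, hc, h⟩ := ih
    refine ⟨c * (zeta n ^ (m * j))⁻¹,
      mul_ne_zero hc (inv_ne_zero (pow_ne_zero _ (zeta_ne_zero n))), ?_⟩
    rw [pow_succ, h, Matrix.smul_mul, wmat_mul n hn _ _ _ _, smul_smul, Nat.mul_succ]

lemma proj_sum {n : ℕ} (b : Fin n → Fin n → ℂ) (hb : IsONBasis b) :
    ∑ k, proj (b k) = 1 := by
  have hBB' : (Matrix.of fun k x => b k x)ᴴ * (Matrix.of fun k x => b k x) = 1 := by
    rw [mul_eq_one_comm]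
    ext k l
    have h := congrArg (starRingEnd ℂ) (hb k l)
    simp only [map_sum, _root_.map_mul, Complex.conj_conj] at h
    rw [show ((starRingEnd ℂ) (if k = l then (1 : ℂ) else 0))
        = if k = l then (1 : ℂ) else 0 by split <;> simp] at h
    simp only [Matrix.mul_apply, Matrix.conjTranspose_apply, Matrix.of_apply,
      Matrix.one_apply, ← starRingEnd_apply]
    exact h
  ext i j
  have h2 := congrFun (congrFun hBB' j) i
  simp only [Matrix.mul_apply, Matrix.conjTranspose_apply, Matrix.of_apply,
    Matrix.one_apply] at h2
  simp only [Matrix.sum_apply, proj]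
  calc ∑ k, b k i * (starRingEnd ℂ) (b k j)
      = ∑ k, star (b k j) * b k i := by
        refine Finset.sum_congr rfl fun k _ => ?_
        rw [starRingEnd_apply, mul_comm]
    _ = if j = i then 1 else 0 := h2
    _ = (1 : Matrix (Fin n) (Fin n) ℂ) i j := by
        rw [Matrix.one_apply]
        simp [eq_comm]

lemma eig_pow {n : ℕ} (A : Matrix (Fin n) (Fin n) ℂ) (v : Fin n → ℂ) (c : ℂ)
    (h : A.mulVec v = c • v) (j : ℕ) : A ^ j * proj v = (c ^ j) • proj v := by
  have hmv : (A ^ j).mulVec v = (c ^ j) • v := by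
    induction j with
    | zero => simp [Matrix.one_mulVec]
    | succ j ih =>
      rw [pow_succ, ← Matrix.mulVec_mulVec, h, Matrix.mulVec_smul, ih, smul_smul, ← pow_succ']
  ext i k
  simp only [Matrix.mul_apply, proj, Matrix.smul_apply, smul_eq_mul]
  calc ∑ x, (A ^ j) i x * (v x * (starRingEnd ℂ) (v k))
      = (∑ x, (A ^ j) i x * v x) * (starRingEnd ℂ) (v k) := by
        rw [Finset.sum_mul]
        exact Finset.sum_congr rfl fun x _ => by ring
    _ = ((A ^ j).mulVec v i) * (starRingEnd ℂ) (v k) := rfl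
    _ = c ^ j * (v i * (starRingEnd ℂ) (v k)) := by
        rw [hmv, Pi.smul_apply, smul_eq_mul, mul_assoc]

/-- For prime `n`, the rank-one projectors onto the vectors of orthonormal
eigenbases of the `n + 1` matrices `U, V, U·V, …, U^(n-1)·V` span the whole
space of `n×n` complex matrices (they form a complete set of projectors). -/
theorem stmt11 {n : ℕ} (hn : n.Prime)
    (A : Fin (n + 1) → Matrix (Fin n) (Fin n) ℂ)
    (hA0 : A 0 = weylU n)
    (hAm : ∀ m : Fin n, A m.succ = weylU n ^ (m : ℕ) * weylV n)
    (b : Fin (n + 1) → Fin n → Fin n → ℂ)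
    (hONB : ∀ i, IsONBasis (b i))
    (heig : ∀ i k, ∃ c : ℂ, (A i).mulVec (b i k) = c • b i k) :
    Submodule.span ℂ
        (Set.range fun q : Fin (n + 1) × Fin n => proj (b q.1 q.2)) = ⊤ := by
  have hn0 : n ≠ 0 := hn.ne_zero
  set S := Submodule.span ℂ
      (Set.range fun q : Fin (n + 1) × Fin n => proj (b q.1 q.2)) with hS
  -- Step 1: every power of every A i lies in S.
  have hpow : ∀ (i : Fin (n + 1)) (j : ℕ), A i ^ j ∈ S := by
    intro i j
    choose c hc using heig i
    have h1 : A i ^ j = ∑ k, (c k) ^ j • proj (b i k) := by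
      calc A i ^ j = A i ^ j * ∑ k, proj (b i k) := by
            rw [proj_sum (b i) (hONB i), mul_one]
        _ = ∑ k, (c k) ^ j • proj (b i k) := by
            rw [Finset.mul_sum]
            exact Finset.sum_congr rfl fun k _ => eig_pow (A i) (b i k) (c k) (hc k) j
    rw [h1]
    exact Submodule.sum_mem _ fun k _ => Submodule.smul_mem _ _
      (Submodule.subset_span ⟨(i, k), rfl⟩)
  -- Step 2: all Weyl operators wmat n a b (with b < n) lie in S.
  have hwmat : ∀ (a : ℕ) (bb : Fin n), wmat n a (bb : ℕ) ∈ S := by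
    intro a bb
    by_cases hb : (bb : ℕ) = 0
    · have he : wmat n a (bb : ℕ) = A 0 ^ a := by
        rw [hA0, hb, ← wmat_eq n a 0, pow_zero, mul_one]
      rw [he]; exact hpow 0 a
    · haveI : Fact n.Prime := ⟨hn⟩
      have hβ : ((bb : ℕ) : ZMod n) ≠ 0 := by
        rw [Ne, ZMod.natCast_eq_zero_iff]
        intro hdvd
        exact hb (Nat.eq_zero_of_dvd_of_lt hdvd bb.isLt)
      set μ : ZMod n := ((a : ℕ) : ZMod n) * ((bb : ℕ) : ZMod n)⁻¹ with hμ
      set m : ℕ := μ.val with hm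
      have hmlt : m < n := μ.val_lt
      have hcast : ((m * (bb : ℕ) : ℕ) : ZMod n) = ((a : ℕ) : ZMod n) := by
        push_cast
        rw [hm, ZMod.natCast_val, ZMod.cast_id, hμ, mul_assoc,
          inv_mul_cancel₀ hβ, mul_one]
      have hmodeq : (m * (bb : ℕ)) % n = a % n :=
        (ZMod.natCast_eq_natCast_iff _ _ _).mp hcast
      have hwa : wmat n a (bb : ℕ) = wmat n (m * (bb : ℕ)) (bb : ℕ) := by
        rw [wmat_mod n hn0 a, wmat_mod n hn0 (m * (bb : ℕ)), hmodeq]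
      have hAe : A (Fin.succ ⟨m, hmlt⟩) = wmat n m 1 := by
        rw [hAm, ← wmat_eq n m 1, pow_one]
      have hmem : wmat n m 1 ^ (bb : ℕ) ∈ S := by
        rw [← hAe]; exact hpow _ _
      obtain ⟨cp, hcp0, hcp⟩ := wmat_pow n hn0 m (bb : ℕ)
      have he : wmat n a (bb : ℕ) = cp⁻¹ • (wmat n m 1 ^ (bb : ℕ)) := by
        rw [hcp, smul_smul, inv_mul_cancel₀ hcp0, one_smul, ← hwa]
      rw [he]
      exact Submodule.smul_mem _ _ hmem
  -- Step 3: Fourier inversion recovers all standard basis matrices.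
  have hstd : ∀ i₀ j₀ : Fin n, Matrix.single i₀ j₀ (1 : ℂ) ∈ S := by
    intro i₀ j₀
    set a : ℕ := (j₀ : ℕ) + n - (i₀ : ℕ) with ha
    have hkey : (n : ℂ) • Matrix.single i₀ j₀ (1 : ℂ)
        = ∑ bb : Fin n, (zeta n ^ ((bb : ℕ) * (j₀ : ℕ)))⁻¹ • wmat n a (bb : ℕ) := by
      ext i j
      simp only [Matrix.smul_apply, Matrix.sum_apply, Matrix.single, wmat,
        Matrix.of_apply, smul_eq_mul]
      have hcond₀ : ((i₀ : ℕ) + a) % n = (j₀ : ℕ) := by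
        have : (i₀ : ℕ) + a = (j₀ : ℕ) + n := by omega
        rw [this, Nat.add_mod_right, Nat.mod_eq_of_lt j₀.isLt]
      by_cases hcond : ((i : ℕ) + a) % n = (j : ℕ)
      · simp only [if_pos hcond]
        have hterm : ∀ bb : Fin n,
            (zeta n ^ ((bb : ℕ) * (j₀ : ℕ)))⁻¹ * zeta n ^ ((j : ℕ) * (bb : ℕ))
            = ((zeta n ^ ((j₀ : ℕ)))⁻¹ * zeta n ^ ((j : ℕ))) ^ (bb : ℕ) := by
          intro bb
          rw [mul_pow, inv_pow, ← pow_mul, ← pow_mul, mul_comm ((j₀ : ℕ)) ((bb : ℕ)),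
            mul_comm ((j : ℕ)) ((bb : ℕ))]
        rw [Finset.sum_congr rfl fun bb _ => hterm bb]
        set w : ℂ := (zeta n ^ ((j₀ : ℕ)))⁻¹ * zeta n ^ ((j : ℕ)) with hw
        rw [Fin.sum_univ_eq_sum_range (fun bbn => w ^ bbn) n]
        by_cases hj : j = j₀
        · -- geometric sum equals n; also i must equal i₀
          have hi : i = i₀ := by
            have h1 : (i : ℕ) + a ≡ (i₀ : ℕ) + a [MOD n] := by
              unfold Nat.ModEq
              rw [hcond, hcond₀, hj]
            have h2 := Nat.ModEq.add_right_cancel' a h1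
            have h3 : (i : ℕ) % n = (i₀ : ℕ) % n := h2
            rw [Nat.mod_eq_of_lt i.isLt, Nat.mod_eq_of_lt i₀.isLt] at h3
            exact Fin.ext h3
          have hw1 : w = 1 := by
            rw [hw, hj, inv_mul_cancel₀ (pow_ne_zero _ (zeta_ne_zero n))]
          rw [hw1]
          simp [hi, hj, Finset.sum_const, one_pow]
        · have hwne : w ≠ 1 := by
            intro hw1
            apply hj
            rw [hw] at hw1
            have he : zeta n ^ ((j₀ : ℕ)) = zeta n ^ ((j : ℕ)) :=
              (inv_mul_eq_one₀ (pow_ne_zero _ (zeta_ne_zero n))).mp hw1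
            exact Fin.ext ((Complex.isPrimitiveRoot_exp n hn0).pow_inj j.isLt j₀.isLt he.symm)
          have hwn : w ^ n = 1 := by
            rw [hw, mul_pow, inv_pow, ← pow_mul, ← pow_mul, mul_comm ((j₀ : ℕ)) n,
              mul_comm ((j : ℕ)) n, pow_mul, pow_mul, zeta_pow_n hn0, one_pow, one_pow,
              inv_one, one_mul]
          rw [geom_sum_eq hwne, hwn, sub_self, zero_div]
          have hne2 : ¬(i₀ = i ∧ j₀ = j) := fun hp => hj hp.2.symm
          rw [if_neg hne2, mul_zero]
      · simp only [if_neg hcond, mul_zero, Finset.sum_const_zero]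
        have hne2 : ¬(i₀ = i ∧ j₀ = j) := by
          rintro ⟨rfl, rfl⟩
          exact hcond hcond₀
        rw [if_neg hne2, mul_zero]
    have hsum : (∑ bb : Fin n, (zeta n ^ ((bb : ℕ) * (j₀ : ℕ)))⁻¹ • wmat n a (bb : ℕ)) ∈ S :=
      Submodule.sum_mem _ fun bb _ => Submodule.smul_mem _ _ (hwmat a bb)
    have hne : (n : ℂ) ≠ 0 := Nat.cast_ne_zero.mpr hn0
    have : Matrix.single i₀ j₀ (1 : ℂ)
        = (n : ℂ)⁻¹ • ((n : ℂ) • Matrix.single i₀ j₀ (1 : ℂ)) := by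
      rw [smul_smul, inv_mul_cancel₀ hne, one_smul]
    rw [this, hkey]
    exact Submodule.smul_mem _ _ hsum
  -- Conclusion
  rw [eq_top_iff]
  intro M _
  rw [matrix_eq_sum_single M]
  refine Submodule.sum_mem _ fun i _ => Submodule.sum_mem _ fun j _ => ?_
  have : Matrix.single i j (M i j) = (M i j) • Matrix.single i j (1 : ℂ) := by
    rw [Matrix.smul_single, smul_eq_mul, mul_one]
  rw [this]
  exact Submodule.smul_mem _ _ (hstd i j)
end

section
/- Let n be a prime number and let U, V be the Weyl pair in dimension n. Consider the n + 1 unitary matrices A_0 = U and A_{m+1} = U^m · V for m = 0, …, n−1. For any two distinct indices i ≠ j in {0, …, n}, if a is a unit eigenvector of A_i and b is a unit eigenvector of A_j, then |⟨a, b⟩|² = 1/n; that is, orthonormal eigenbases of any two distinct matrices from this family are mutually unbiased. -/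
open Matrix

/-! If unitaries `M`, `N` on an `n`-dimensional space satisfy `N M = ω M N` for a primitive
`n`-th root of unity `ω`, and `N b = β b`, then the vectors `Mᵏ b` (`k < n`) are eigenvectors
of `N` with the pairwise distinct eigenvalues `ωᵏ β`, hence form an orthonormal basis. For an
eigenvector `a` of `M` every coefficient `⟪Mᵏ b, a⟫` has the modulus of `⟪b, a⟫`, so Parseval
gives `n |⟪a, b⟫|² = 1`. Any two members of the Weyl family commute up to a power `ζᵈ` with
`0 < d < n`, which is a primitive `n`-th root of unity because `n` is prime. -/

open scoped InnerProductSpace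

theorem pow_mul_eq_smul_mul_pow {S R : Type*} [CommSemiring S] [Semiring R] [Algebra S R]
    {u v : R} {z : S} (h : v * u = z • (u * v)) (k : ℕ) :
    v * u ^ k = z ^ k • (u ^ k * v) := by
  induction k with
  | zero => simp
  | succ k ih =>
    rw [pow_succ, ← mul_assoc, ih, smul_mul_assoc, mul_assoc, h, mul_smul_comm, smul_smul,
      ← mul_assoc, pow_succ', mul_comm (z ^ k), ← pow_succ]

theorem pow_mul_mul_pow_mul_eq_smul {S R : Type*} [CommSemiring S] [Semiring R]
    [Algebra S R] {u v : R} {z : S} (h : v * u = z • (u * v)) (p q : ℕ) :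
    (u ^ p * v) * (u ^ q * v) = z ^ q • (u ^ (p + q) * v ^ 2) := by
  rw [mul_assoc, ← mul_assoc v, pow_mul_eq_smul_mul_pow h, smul_mul_assoc, mul_smul_comm,
    pow_add, sq]
  simp only [mul_assoc]

theorem ContinuousLinearMap.pow_apply_of_apply_eq_smul {R M : Type*} [Semiring R]
    [TopologicalSpace M] [AddCommMonoid M] [Module R M] [ContinuousConstSMul R M]
    {u : M →L[R] M} {x : M} {c : R} (h : u x = c • x) (k : ℕ) :
    (u ^ k) x = c ^ k • x := by
  induction k with
  | zero => simp
  | succ k ih => rw [pow_succ', mul_apply_eq_comp, ih, map_smul, h, smul_smul, pow_succ]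

section Unitary

variable {𝕜 E : Type*} [RCLike 𝕜] [NormedAddCommGroup E] [InnerProductSpace 𝕜 E]
  [CompleteSpace E] {u : E →L[𝕜] E}

theorem norm_eigenvalue_eq_one_of_mem_unitary (hu : u ∈ unitary (E →L[𝕜] E)) {x : E}
    {c : 𝕜} (hx : u x = c • x) (hx0 : x ≠ 0) : ‖c‖ = 1 := by
  have h := u.norm_map_of_mem_unitary hu x
  rw [hx, norm_smul] at h
  exact (mul_eq_right₀ (norm_ne_zero_iff.mpr hx0)).mp h

theorem inner_eq_zero_of_mem_unitary_of_eigenvalue_ne (hu : u ∈ unitary (E →L[𝕜] E))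
    {x y : E} {c d : 𝕜} (hx : u x = c • x) (hy : u y = d • y) (hc : ‖c‖ = 1)
    (hcd : c ≠ d) :
    ⟪x, y⟫_𝕜 = 0 := by
  by_contra hxy
  have h := u.inner_map_map_of_mem_unitary hu x y
  rw [hx, hy, inner_smul_left, inner_smul_right, ← mul_assoc] at h
  have hconj : (starRingEnd 𝕜) c * d = 1 := (mul_eq_right₀ hxy).mp h
  apply hcd
  calc c = c * ((starRingEnd 𝕜) c * d) := by rw [hconj, mul_one]
    _ = d := by rw [← mul_assoc, RCLike.mul_conj, hc]; simp

end Unitary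

section TwistedCommutation

variable {E : Type*} [NormedAddCommGroup E] [InnerProductSpace ℂ E] [FiniteDimensional ℂ E]
  {M N : E →L[ℂ] E} {ω β : ℂ} {b : E}

theorem orthonormal_pow_apply_of_mul_eq_smul_mul (hM : M ∈ unitary (E →L[ℂ] E))
    (hN : N ∈ unitary (E →L[ℂ] E)) (hω : IsPrimitiveRoot ω (Module.finrank ℂ E))
    (hNM : N * M = ω • (M * N)) (hb : N b = β • b) (hnb : ‖b‖ = 1) :
    Orthonormal ℂ fun k : Fin (Module.finrank ℂ E) => (M ^ (k : ℕ)) b := by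
  have hb0 : b ≠ 0 := norm_ne_zero_iff.mp (by simp [hnb])
  have hβ : ‖β‖ = 1 := norm_eigenvalue_eq_one_of_mem_unitary hN hb hb0
  have hd : Module.finrank ℂ E ≠ 0 :=
    have : Nontrivial E := nontrivial_of_ne b 0 hb0
    Module.finrank_pos.ne'
  have hNMk (k : ℕ) : N ((M ^ k) b) = (ω ^ k * β) • (M ^ k) b := by
    rw [← mul_apply_eq_comp, pow_mul_eq_smul_mul_pow hNM, _root_.smul_apply, mul_apply_eq_comp,
      hb, map_smul, smul_smul]
  refine ⟨fun k => by rw [(M ^ (k : ℕ)).norm_map_of_mem_unitary (pow_mem hM _), hnb], ?_⟩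
  intro k l hkl
  refine inner_eq_zero_of_mem_unitary_of_eigenvalue_ne hN (hNMk k) (hNMk l)
    (by rw [norm_mul, norm_pow, hω.norm'_eq_one hd, one_pow, one_mul, hβ]) fun h => hkl ?_
  have hβ0 : β ≠ 0 := norm_ne_zero_iff.mp (by simp [hβ])
  exact Fin.ext (hω.pow_inj k.isLt l.isLt (mul_right_cancel₀ hβ0 h))

theorem norm_inner_sq_eq_one_div_finrank_of_mul_eq_smul_mul (hM : M ∈ unitary (E →L[ℂ] E))
    (hN : N ∈ unitary (E →L[ℂ] E)) (hω : IsPrimitiveRoot ω (Module.finrank ℂ E))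
    (hNM : N * M = ω • (M * N)) {a : E} {α : ℂ} (ha : M a = α • a) (hb : N b = β • b)
    (hna : ‖a‖ = 1) (hnb : ‖b‖ = 1) :
    ‖⟪a, b⟫_ℂ‖ ^ 2 = 1 / Module.finrank ℂ E := by
  set d := Module.finrank ℂ E
  have hα : ‖α‖ = 1 :=
    norm_eigenvalue_eq_one_of_mem_unitary hM ha (norm_ne_zero_iff.mp (by simp [hna]))
  have hon := orthonormal_pow_apply_of_mul_eq_smul_mul hM hN hω hNM hb hnb
  have hcard : Fintype.card (Fin d) = d := Fintype.card_fin d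
  let B : OrthonormalBasis (Fin d) ℂ E :=
    OrthonormalBasis.mk hon (hon.linearIndependent.span_eq_top_of_card_eq_finrank' hcard).ge
  have hcoeff (k : Fin d) : ‖⟪B k, a⟫_ℂ‖ = ‖⟪b, a⟫_ℂ‖ := by
    have h := (M ^ (k : ℕ)).inner_map_map_of_mem_unitary (pow_mem hM _) b a
    rw [M.pow_apply_of_apply_eq_smul ha, inner_smul_right] at h
    rw [OrthonormalBasis.coe_mk, ← h, norm_mul, norm_pow, hα, one_pow, one_mul]
  have hparseval := B.sum_sq_norm_inner_right a
  simp only [hcoeff, Finset.sum_const, Finset.card_univ, hcard, nsmul_eq_mul, hna,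
    one_pow] at hparseval
  rw [norm_inner_symm]
  exact eq_one_div_of_mul_eq_one_right hparseval

end TwistedCommutation

theorem Matrix.norm_sum_conj_mul_sq_eq_one_div_of_mul_eq_smul_mul {n : ℕ}
    {M N : Matrix (Fin n) (Fin n) ℂ} (hM : M ∈ unitaryGroup (Fin n) ℂ)
    (hN : N ∈ unitaryGroup (Fin n) ℂ) {ω : ℂ} (hω : IsPrimitiveRoot ω n)
    (hNM : N * M = ω • (M * N)) {a b : Fin n → ℂ} {α β : ℂ}
    (ha : M *ᵥ a = α • a) (hb : N *ᵥ b = β • b)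
    (hna : ∑ x, (starRingEnd ℂ) (a x) * a x = 1)
    (hnb : ∑ x, (starRingEnd ℂ) (b x) * b x = 1) :
    ‖∑ x, (starRingEnd ℂ) (a x) * b x‖ ^ 2 = 1 / n := by
  have hinner (v w : Fin n → ℂ) :
      ⟪WithLp.toLp 2 v, WithLp.toLp 2 w⟫_ℂ = ∑ x, (starRingEnd ℂ) (v x) * w x := by
    simp [EuclideanSpace.inner_toLp_toLp, dotProduct, mul_comm]
  have hnorm {v : Fin n → ℂ} (hv : ∑ x, (starRingEnd ℂ) (v x) * v x = 1) :
      ‖WithLp.toLp 2 v‖ = 1 := by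
    have h := inner_self_eq_norm_sq_to_K (𝕜 := ℂ) (WithLp.toLp 2 v)
    rw [hinner, hv] at h
    exact (pow_eq_one_iff_of_nonneg (norm_nonneg _) two_ne_zero).mp
      (Complex.ofReal_eq_one.mp (by push_cast; exact h.symm))
  have h := norm_inner_sq_eq_one_div_finrank_of_mul_eq_smul_mul
    (M := toEuclideanCLM (𝕜 := ℂ) M) (N := toEuclideanCLM (𝕜 := ℂ) N)
    (Unitary.map_mem _ hM) (Unitary.map_mem _ hN)
    (by rwa [finrank_euclideanSpace_fin]) (by rw [← map_mul, ← map_mul, hNM, map_smul])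
    (a := WithLp.toLp 2 a) (b := WithLp.toLp 2 b)
    (by rw [toEuclideanCLM_toLp, ha]; rfl) (by rw [toEuclideanCLM_toLp, hb]; rfl)
    (hnorm hna) (hnorm hnb)
  rwa [hinner, finrank_euclideanSpace_fin] at h

section Weyl

variable {n : ℕ} [NeZero n]

theorem isPrimitiveRoot_zeta : IsPrimitiveRoot (zeta n) n :=
  Complex.isPrimitiveRoot_exp n (NeZero.ne n)

theorem zeta_pow_val_add_one (i : Fin n) :
    zeta n ^ ((i + 1 : Fin n) : ℕ) = zeta n * zeta n ^ (i : ℕ) := by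
  rw [← pow_succ', Fin.val_add, Fin.val_one', Nat.add_mod_mod]
  conv_rhs => rw [← Nat.mod_add_div (i + 1) n, pow_add, pow_mul,
    isPrimitiveRoot_zeta.pow_eq_one, one_pow, mul_one]

theorem weylU_eq_permMatrix : weylU n = (Equiv.addRight (1 : Fin n)).permMatrix ℂ := by
  ext i j
  simp [weylU, PEquiv.toMatrix_apply, Fin.ext_iff, Fin.val_add, Nat.add_mod_mod]

theorem weylU_mem_unitaryGroup : weylU n ∈ unitaryGroup (Fin n) ℂ := by
  rw [mem_unitaryGroup_iff, weylU_eq_permMatrix, star_eq_conjTranspose, conjTranspose_permMatrix,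
    ← permMatrix_mul, inv_mul_cancel, permMatrix_one]

theorem weylV_mem_unitaryGroup : weylV n ∈ unitaryGroup (Fin n) ℂ := by
  rw [mem_unitaryGroup_iff, weylV, star_eq_conjTranspose, diagonal_conjTranspose,
    diagonal_mul_diagonal, ← diagonal_one]
  congr 1
  ext k
  rw [Pi.star_apply, star_pow, Complex.star_def, ← mul_pow, Complex.mul_conj,
    Complex.normSq_eq_norm_sq, isPrimitiveRoot_zeta.norm'_eq_one (NeZero.ne n)]
  simp

theorem weylU_mul_weylV : weylU n * weylV n = zeta n • (weylV n * weylU n) := by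
  ext i j
  simp only [weylV, mul_diagonal, diagonal_mul, Matrix.smul_apply, smul_eq_mul,
    weylU_eq_permMatrix]
  by_cases h : i + 1 = j
  · subst h
    simp [zeta_pow_val_add_one]
  · simp [PEquiv.toMatrix_apply, h]

theorem weylV_mul_weylU : weylV n * weylU n = (zeta n)⁻¹ • (weylU n * weylV n) := by
  rw [weylU_mul_weylV, smul_smul, inv_mul_cancel₀ (isPrimitiveRoot_zeta.ne_zero (NeZero.ne n)),
    one_smul]

theorem weylU_pow_mul_weylV_mul_weylU (m : ℕ) :
    (weylU n ^ m * weylV n) * weylU n = (zeta n)⁻¹ • (weylU n * (weylU n ^ m * weylV n)) := by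
  rw [mul_assoc, weylV_mul_weylU, mul_smul_comm, ← mul_assoc, ← mul_assoc, ← pow_succ,
    pow_succ']

theorem weylU_pow_mul_weylV_mul_comm {m m' : ℕ} (h : m ≤ m') :
    (weylU n ^ m' * weylV n) * (weylU n ^ m * weylV n)
      = zeta n ^ (m' - m) • ((weylU n ^ m * weylV n) * (weylU n ^ m' * weylV n)) := by
  obtain ⟨d, rfl⟩ := Nat.exists_eq_add_of_le h
  have hζ : zeta n ≠ 0 := isPrimitiveRoot_zeta.ne_zero (NeZero.ne n)
  rw [pow_mul_mul_pow_mul_eq_smul weylV_mul_weylU, pow_mul_mul_pow_mul_eq_smul weylV_mul_weylU,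
    smul_smul, Nat.add_sub_cancel_left, add_comm m (m + d)]
  congr 1
  rw [inv_pow, inv_pow, pow_add]
  field_simp

end Weyl

section Family

variable {n : ℕ} {A : Fin (n + 1) → Matrix (Fin n) (Fin n) ℂ}

theorem mem_unitaryGroup_of_weyl_family [NeZero n] (hA0 : A 0 = weylU n)
    (hAm : ∀ m : Fin n, A m.succ = weylU n ^ (m : ℕ) * weylV n) (i : Fin (n + 1)) :
    A i ∈ unitaryGroup (Fin n) ℂ := by
  rcases Fin.eq_zero_or_eq_succ i with rfl | ⟨m, rfl⟩
  · exact hA0 ▸ weylU_mem_unitaryGroup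
  · exact hAm m ▸ mul_mem (pow_mem weylU_mem_unitaryGroup _) weylV_mem_unitaryGroup

theorem exists_isPrimitiveRoot_mul_eq_smul_mul_of_lt (hn : n.Prime) (hA0 : A 0 = weylU n)
    (hAm : ∀ m : Fin n, A m.succ = weylU n ^ (m : ℕ) * weylV n) {i j : Fin (n + 1)}
    (hij : i < j) :
    ∃ ω : ℂ, IsPrimitiveRoot ω n ∧ A j * A i = ω • (A i * A j) := by
  have : NeZero n := ⟨hn.ne_zero⟩
  obtain ⟨m', rfl⟩ := Fin.exists_succ_eq.mpr (Fin.ne_zero_of_lt hij)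
  rcases Fin.eq_zero_or_eq_succ i with rfl | ⟨m, rfl⟩
  · exact ⟨(zeta n)⁻¹, isPrimitiveRoot_zeta.inv, by
      rw [hA0, hAm, weylU_pow_mul_weylV_mul_weylU]⟩
  · have hmm' : (m : ℕ) < m' := Fin.succ_lt_succ_iff.mp hij
    refine ⟨zeta n ^ ((m' : ℕ) - m), isPrimitiveRoot_zeta.pow_of_coprime _ ?_, by
      rw [hAm, hAm, weylU_pow_mul_weylV_mul_comm hmm'.le]⟩
    exact Nat.Coprime.symm ((Nat.Prime.coprime_iff_not_dvd hn).mpr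
      (Nat.not_dvd_of_pos_of_lt (Nat.sub_pos_of_lt hmm') (by omega)))

theorem exists_isPrimitiveRoot_mul_eq_smul_mul (hn : n.Prime) (hA0 : A 0 = weylU n)
    (hAm : ∀ m : Fin n, A m.succ = weylU n ^ (m : ℕ) * weylV n) {i j : Fin (n + 1)}
    (hij : i ≠ j) :
    ∃ ω : ℂ, IsPrimitiveRoot ω n ∧ A j * A i = ω • (A i * A j) := by
  rcases hij.lt_or_gt with h | h
  · exact exists_isPrimitiveRoot_mul_eq_smul_mul_of_lt hn hA0 hAm h
  · obtain ⟨ω, hω, hji⟩ := exists_isPrimitiveRoot_mul_eq_smul_mul_of_lt hn hA0 hAm h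
    refine ⟨ω⁻¹, hω.inv, ?_⟩
    rw [hji, smul_smul, inv_mul_cancel₀ (hω.ne_zero hn.ne_zero), one_smul]

end Family

/-- For prime `n`, consider the `n + 1` matrices `A 0 = U`, `A (m+1) = U^m·V`.
Unit eigenvectors of two distinct matrices of this family satisfy
`|⟨a, b⟩|² = 1/n`: their orthonormal eigenbases are mutually unbiased. -/
theorem stmt13 {n : ℕ} (hn : n.Prime)
    (A : Fin (n + 1) → Matrix (Fin n) (Fin n) ℂ)
    (hA0 : A 0 = weylU n)
    (hAm : ∀ m : Fin n, A m.succ = weylU n ^ (m : ℕ) * weylV n)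
    (i j : Fin (n + 1)) (hij : i ≠ j)
    (a b : Fin n → ℂ) (ca cb : ℂ)
    (ha : (A i).mulVec a = ca • a) (hb : (A j).mulVec b = cb • b)
    (hna : (∑ x, (starRingEnd ℂ) (a x) * a x) = 1)
    (hnb : (∑ x, (starRingEnd ℂ) (b x) * b x) = 1) :
    ‖∑ x, (starRingEnd ℂ) (a x) * b x‖ ^ 2 = 1 / n := by
  have : NeZero n := ⟨hn.ne_zero⟩
  obtain ⟨ω, hω, hji⟩ := exists_isPrimitiveRoot_mul_eq_smul_mul hn hA0 hAm hij
  exact Matrix.norm_sum_conj_mul_sq_eq_one_div_of_mul_eq_smul_mul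
    (mem_unitaryGroup_of_weyl_family hA0 hAm i) (mem_unitaryGroup_of_weyl_family hA0 hAm j)
    hω hji ha hb hna hnb
end
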